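/- arXiv:2311.07695 — 6 statements merged into one kernel-verified Lean document; each statement's English description precedes it below -/
import Mathlib

section
/- If a system has a barrier certificate with respect to an unsafe set, then the system is safe: no state reachable from an initial state lies in the unsafe set. Precisely, if B : X → ℝ satisfies B(x) ≤ 0 for all x ∈ X₀, B(x) > 0 for all x ∈ Xᵤ, and B(f(x)) ≤ B(x) for all x ∈ X, then for every x₀ ∈ X₀ and every n ∈ ℕ, fⁿ(x₀) ∉ Xᵤ. -/
theorem barrier_implies_safety
    {X : Type*} (X0 Xu : Set X) (f : X → X) (B : X → ℝ)
    (h0 : ∀ x ∈ X0, B x ≤ 0)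
    (hu : ∀ x ∈ Xu, B x > 0)
    (hd : ∀ x, B (f x) ≤ B x) :
    ∀ x0 ∈ X0, ∀ n : ℕ, f^[n] x0 ∉ Xu := by
  intro x0 hx0 n hmem
  have key : ∀ m : ℕ, B (f^[m] x0) ≤ 0 := by
    intro m
    induction m with
    | zero => simpa using h0 x0 hx0
    | succ k ih =>
      rw [Function.iterate_succ_apply']
      exact le_trans (hd _) ih
  exact absurd (hu _ hmem) (not_lt.mpr (key n))
end

section
/- (CBBCs imply bounded visits, Theorem 3.2) Let (X, X₀, f) be a system and X_VF ⊆ X. Suppose there exist k ∈ ℕ and B : X × ℕ → ℝ such that: (1) B(x, 0) ≤ 0 for all x ∈ X₀ \ X_VF; (2) B(x, 1) ≤ 0 for all x ∈ X₀ ∩ X_VF; (3) B(x, k+1) > 0 for all x ∈ X_VF; (4) for all 0 ≤ i ≤ k and x ∈ X with f(x) ∉ X_VF, B(f(x), i) ≤ B(x, i); (5) for all 0 ≤ i ≤ k and x ∈ X with f(x) ∈ X_VF, B(f(x), i+1) ≤ B(x, i). Then every state sequence of the system visits X_VF at most k times, i.e., for every x₀ ∈ X₀, the set {n ∈ ℕ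 | fⁿ(x₀) ∈ X_VF} has cardinality at most k. -/
theorem cbbc_implies_bounded_visits
    {X : Type*} (X0 XVF : Set X) (f : X → X) (k : ℕ) (B : X → ℕ → ℝ)
    (h1 : ∀ x ∈ X0 \ XVF, B x 0 ≤ 0)
    (h2 : ∀ x ∈ X0 ∩ XVF, B x 1 ≤ 0)
    (h3 : ∀ x ∈ XVF, B x (k + 1) > 0)
    (h4 : ∀ i ≤ k, ∀ x, f x ∉ XVF → B (f x) i ≤ B x i)
    (h5 : ∀ i ≤ k, ∀ x, f x ∈ XVF → B (f x) (i + 1) ≤ B x i) :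
    ∀ x0 ∈ X0, {n : ℕ | f^[n] x0 ∈ XVF}.encard ≤ (k : ℕ∞) := by
  classical
  intro x0 hx0
  set c : ℕ → ℕ := fun n =>
    ((Finset.range (n + 1)).filter (fun m => f^[m] x0 ∈ XVF)).card with hc
  -- key invariant
  have key : ∀ n, B (f^[n] x0) (c n) ≤ 0 ∧ c n ≤ k := by
    intro n
    induction n with
    | zero =>
      by_cases hv : f^[0] x0 ∈ XVF
      · have hv' : x0 ∈ XVF := by simpa using hv
        have hc0 : c 0 = 1 := by
          simp [hc, Finset.filter_singleton, hv']
        have hB : B x0 1 ≤ 0 := h2 x0 ⟨hx0, hv'⟩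
        have hk : 1 ≤ k := by
          by_contra hk
          have hk0 : k = 0 := by omega
          have := h3 _ hv
          simp only [Function.iterate_zero, id_eq] at this
          rw [hk0] at this
          linarith
        refine ⟨?_, by omega⟩
        simpa [hc0] using hB
      · have hv' : x0 ∉ XVF := by simpa using hv
        have hc0 : c 0 = 0 := by
          simp [hc, Finset.filter_singleton, hv']
        refine ⟨?_, by omega⟩
        rw [hc0]
        exact h1 x0 ⟨hx0, hv'⟩
    | succ n ih =>
      obtain ⟨ihB, ihk⟩ := ih
      have hit : f^[n+1] x0 = f (f^[n] x0) := Function.iterate_succ_apply' f n x0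
      have hsplit : c (n + 1) = c n + (if f^[n+1] x0 ∈ XVF then 1 else 0) := by
        simp only [hc]
        rw [show n + 1 + 1 = (n + 1) + 1 from rfl, Finset.range_add_one,
          Finset.filter_insert]
        split
        · rw [Finset.card_insert_of_notMem (by simp)]
        · simp
      by_cases hv : f^[n+1] x0 ∈ XVF
      · have hcn : c (n + 1) = c n + 1 := by rw [hsplit, if_pos hv]
        have hfx : f (f^[n] x0) ∈ XVF := by rw [← hit]; exact hv
        have hB : B (f^[n+1] x0) (c n + 1) ≤ B (f^[n] x0) (c n) := by
          rw [hit]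
          exact h5 (c n) ihk (f^[n] x0) hfx
        have hB2 : B (f^[n+1] x0) (c n + 1) ≤ 0 := le_trans hB ihB
        have hk2 : c n + 1 ≤ k := by
          by_contra hk
          have : c n = k := by omega
          rw [this] at hB2
          have := h3 _ hv
          linarith
        exact ⟨by rw [hcn]; exact hB2, by omega⟩
      · have hcn : c (n + 1) = c n := by rw [hsplit, if_neg hv]; omega
        have hfx : f (f^[n] x0) ∉ XVF := by rw [← hit]; exact hv
        have hB : B (f^[n+1] x0) (c n) ≤ B (f^[n] x0) (c n) := by
          rw [hit]
          exact h4 (c n) ihk (f^[n] x0) hfx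
        exact ⟨by rw [hcn]; exact le_trans hB ihB, by omega⟩
  -- conclude
  by_contra hcon
  push_neg at hcon
  have hle : (↑(k + 1) : ℕ∞) ≤ {n : ℕ | f^[n] x0 ∈ XVF}.encard := by
    exact Order.add_one_le_of_lt (by exact_mod_cast hcon)
  obtain ⟨t, hts, htcard⟩ := Set.exists_subset_encard_eq hle
  have htfin : t.Finite := Set.finite_of_encard_eq_coe htcard
  obtain ⟨N, hN⟩ := htfin.bddAbove
  have hsub : htfin.toFinset ⊆ (Finset.range (N + 1)).filter
      (fun m => f^[m] x0 ∈ XVF) := by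
    intro m hm
    rw [Set.Finite.mem_toFinset] at hm
    refine Finset.mem_filter.mpr ⟨Finset.mem_range.mpr ?_, hts hm⟩
    have := hN hm
    omega
  have hcard : htfin.toFinset.card = k + 1 := by
    have := htfin.encard_eq_coe_toFinset_card
    rw [htcard] at this
    exact_mod_cast this.symm
  have := Finset.card_le_card hsub
  have := (key N).2
  simp only [hc] at this
  omega
end

section
/- Under the hypotheses of a CBBC with bound k, the counter along any state sequence never exceeds k: define c : ℕ → ℕ by c(0) = 1 if x₀ ∈ X_VF else 0, and c(n+1) = c(n) + 1 if f^{n+1}(x₀) ∈ X_VF, else c(n). Then B(fⁿ(x₀), c(n)) ≤ 0 and c(n) ≤ k for all n ∈ ℕ and x₀ ∈ X₀. -/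
theorem cbbc_counter_bounded
    {X : Type*} (X0 XVF : Set X) [∀ x : X, Decidable (x ∈ XVF)] (f : X → X) (k : ℕ) (B : X → ℕ → ℝ)
    (h1 : ∀ x ∈ X0 \ XVF, B x 0 ≤ 0)
    (h2 : ∀ x ∈ X0 ∩ XVF, B x 1 ≤ 0)
    (h3 : ∀ x ∈ XVF, B x (k + 1) > 0)
    (h4 : ∀ i ≤ k, ∀ x, f x ∉ XVF → B (f x) i ≤ B x i)
    (h5 : ∀ i ≤ k, ∀ x, f x ∈ XVF → B (f x) (i + 1) ≤ B x i)
    (x0 : X) (hx0 : x0 ∈ X0) (c : ℕ → ℕ)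
    (hc0 : c 0 = if x0 ∈ XVF then 1 else 0)
    (hcs : ∀ n, c (n + 1) = if f^[n + 1] x0 ∈ XVF then c n + 1 else c n) :
    ∀ n : ℕ, B (f^[n] x0) (c n) ≤ 0 ∧ c n ≤ k := by
  intro n
  induction n with
  | zero =>
    simp only [Function.iterate_zero, id_eq]
    by_cases hv : x0 ∈ XVF
    · rw [hc0, if_pos hv]
      have hb : B x0 1 ≤ 0 := h2 x0 ⟨hx0, hv⟩
      refine ⟨hb, ?_⟩
      by_contra h
      have hk : k = 0 := by omega
      have := h3 x0 hv
      rw [hk] at this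
      linarith
    · rw [hc0, if_neg hv]
      exact ⟨h1 x0 ⟨hx0, hv⟩, Nat.zero_le _⟩
  | succ n ih =>
    obtain ⟨hB, hk⟩ := ih
    have hiter : f^[n + 1] x0 = f (f^[n] x0) := Function.iterate_succ_apply' f n x0
    by_cases hv : f^[n + 1] x0 ∈ XVF
    · rw [hcs n, if_pos hv]
      have hv' : f (f^[n] x0) ∈ XVF := hiter ▸ hv
      have hstep : B (f (f^[n] x0)) (c n + 1) ≤ B (f^[n] x0) (c n) :=
        h5 (c n) hk _ hv'
      have hB' : B (f^[n + 1] x0) (c n + 1) ≤ 0 := by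
        rw [hiter]; linarith
      refine ⟨hB', ?_⟩
      by_contra h
      have hck : c n = k := by omega
      have := h3 _ hv
      rw [← hck] at this
      linarith
    · rw [hcs n, if_neg hv]
      have hv' : f (f^[n] x0) ∉ XVF := hiter ▸ hv
      have := h4 (c n) hk _ hv'
      rw [← hiter] at this
      exact ⟨le_trans this hB, hk⟩
end

section
/- A CBBC with bound k = 0 is equivalent to a classical barrier certificate: if B : X × ℕ → ℝ satisfies the CBBC conditions with k = 0 for region X_VF, then the function x ↦ B(x, 0) on X \ X_VF together with the conditions yields safety with respect to X_VF; i.e., no state sequence of the system ever visits X_VF (provided X₀ ∩ X_VF = ∅), recovering the classical barrier certificate guarantee. -/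
theorem cbbc_k_zero_is_barrier
    {X : Type*} (X0 XVF : Set X) (f : X → X) (B : X → ℕ → ℝ)
    (hdisj : X0 ∩ XVF = ∅)
    (h1 : ∀ x ∈ X0, B x 0 ≤ 0)
    (h3 : ∀ x ∈ XVF, B x 1 > 0)
    (h4 : ∀ x, f x ∉ XVF → B (f x) 0 ≤ B x 0)
    (h5 : ∀ x, f x ∈ XVF → B (f x) 1 ≤ B x 0) :
    ∀ x0 ∈ X0, ∀ n : ℕ, f^[n] x0 ∉ XVF := by
  intro x0 hx0 n
  suffices h : f^[n] x0 ∉ XVF ∧ B (f^[n] x0) 0 ≤ 0 from h.1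
  induction n with
  | zero =>
    refine ⟨fun hv => ?_, h1 x0 hx0⟩
    exact Set.eq_empty_iff_forall_notMem.mp hdisj x0 ⟨hx0, hv⟩
  | succ n ih =>
    rw [Function.iterate_succ_apply']
    set x := f^[n] x0 with hx
    by_cases hv : f x ∈ XVF
    · exact absurd (h3 _ hv) (not_lt.mpr ((h5 x hv).trans ih.2))
    · exact ⟨hv, (h4 x hv).trans ih.2⟩
end

section
/- (Soundness of the counter-extended system) Let S = (X, X₀, f) be a system and X_VF ⊆ X. Define the extended system S' with state set X × ℕ, initial states {(x, 0) | x ∈ X₀ \ X_VF} ∪ {(x, 1) | x ∈ X₀ ∩ X_VF}, and transition f'(x, i) = (f(x), i+1) if f(x) ∈ X_VF, else (f(x), i). Then for every x₀ ∈ X₀ and n ∈ ℕ, the second component of (f')ⁿ applied to the initial extended state of x₀ equals the number of indices j ∈ {0, …, n} with f^j(x₀) ∈ X_VF. Consequently, every state sequence of S visits X_VF at most k times if and only if the extended system S' never reaches a state (x, ℓ) with ℓ ≥ k+1 and x ∈ X_VF. -/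
section Aux

variable {X : Type*} (XVF : Set X) [∀ x : X, Decidable (x ∈ XVF)]
  (f : X → X) (f' : X × ℕ → X × ℕ)

lemma counter_iter
    (hf' : ∀ x i, f' (x, i) = if f x ∈ XVF then (f x, i + 1) else (f x, i))
    (x0 : X) (n : ℕ) :
    (f')^[n] (if x0 ∈ XVF then (x0, 1) else (x0, 0)) =
      (f^[n] x0,
        ((Finset.range (n+1)).filter (fun j => f^[j] x0 ∈ XVF)).card) := by
  induction n with
  | zero =>
    split_ifs with h <;> simp [Finset.filter_singleton, h]
  | succ n ih =>
    rw [Function.iterate_succ_apply', ih, hf']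
    have hr : Finset.range (n+2) = insert (n+1) (Finset.range (n+1)) :=
      Finset.range_add_one
    rw [hr, Finset.filter_insert]
    rw [Function.iterate_succ_apply' f]
    split_ifs with h
    · rw [Finset.card_insert_of_notMem (by simp)]
    · rfl

lemma set_eq_filter (x0 : X) (n : ℕ) :
    {j : ℕ | j ≤ n ∧ f^[j] x0 ∈ XVF}.ncard =
      ((Finset.range (n+1)).filter (fun j => f^[j] x0 ∈ XVF)).card := by
  rw [← Set.ncard_coe_finset]
  congr 1
  ext j
  simp [Nat.lt_succ_iff, and_comm]

end Aux

theorem counter_extension_sound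
    {X : Type*} (X0 XVF : Set X) [∀ x : X, Decidable (x ∈ XVF)]
    (f : X → X) (f' : X × ℕ → X × ℕ)
    (hf' : ∀ x i, f' (x, i) = if f x ∈ XVF then (f x, i + 1) else (f x, i)) :
    (∀ x0 ∈ X0, ∀ n : ℕ,
      ((f')^[n] (if x0 ∈ XVF then (x0, 1) else (x0, 0))).2 =
        {j : ℕ | j ≤ n ∧ f^[j] x0 ∈ XVF}.ncard) ∧
    ∀ k : ℕ,
      ((∀ x0 ∈ X0, {j : ℕ | f^[j] x0 ∈ XVF}.encard ≤ (k : ℕ∞)) ↔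
        (∀ x0 ∈ X0, ∀ n : ℕ,
          ¬ (((f')^[n] (if x0 ∈ XVF then (x0, 1) else (x0, 0))).1 ∈ XVF ∧
            k + 1 ≤ ((f')^[n] (if x0 ∈ XVF then (x0, 1) else (x0, 0))).2))) := by
  have key : ∀ (x0 : X) (n : ℕ),
      (f')^[n] (if x0 ∈ XVF then (x0, 1) else (x0, 0)) =
        (f^[n] x0, {j : ℕ | j ≤ n ∧ f^[j] x0 ∈ XVF}.ncard) := by
    intro x0 n
    rw [counter_iter XVF f f' hf' x0 n, set_eq_filter]
  have hfin : ∀ (x0 : X) (n : ℕ), {j : ℕ | j ≤ n ∧ f^[j] x0 ∈ XVF}.Finite := by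
    intro x0 n
    exact (Set.finite_Icc 0 n).subset (fun j hj => ⟨Nat.zero_le _, hj.1⟩)
  constructor
  · intro x0 _ n
    rw [key]
  · intro k
    constructor
    · intro H x0 hx0 n ⟨h1, h2⟩
      rw [key] at h1 h2
      simp only at h1 h2
      have hsub : {j : ℕ | j ≤ n ∧ f^[j] x0 ∈ XVF} ⊆ {j : ℕ | f^[j] x0 ∈ XVF} :=
        fun j hj => hj.2
      have : ((k + 1 : ℕ) : ℕ∞) ≤ (k : ℕ∞) := by
        calc ((k + 1 : ℕ) : ℕ∞) ≤ ({j : ℕ | j ≤ n ∧ f^[j] x0 ∈ XVF}.ncard : ℕ∞) := by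
              exact_mod_cast Nat.cast_le.mpr h2
          _ = {j : ℕ | j ≤ n ∧ f^[j] x0 ∈ XVF}.encard := (hfin x0 n).cast_ncard_eq
          _ ≤ {j : ℕ | f^[j] x0 ∈ XVF}.encard := Set.encard_mono hsub
          _ ≤ (k : ℕ∞) := H x0 hx0
      have h3 : k + 1 ≤ k := by exact_mod_cast this
      omega
    · intro H x0 hx0
      by_contra hlt
      push_neg at hlt
      have hk1 : ((k + 1 : ℕ) : ℕ∞) ≤ {j : ℕ | f^[j] x0 ∈ XVF}.encard := by
        exact_mod_cast Order.add_one_le_of_lt hlt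
      obtain ⟨t, hts, htc⟩ := Set.exists_subset_encard_eq hk1
      have htfin : t.Finite := Set.finite_of_encard_eq_coe htc
      have htne : t.Nonempty := by
        rw [← Set.encard_ne_zero, htc]
        simp
      have hne' : htfin.toFinset.Nonempty := Set.Finite.toFinset_nonempty htfin |>.mpr htne
      set n := htfin.toFinset.max' hne' with hn
      have hnt : n ∈ t := htfin.mem_toFinset.mp (htfin.toFinset.max'_mem hne')
      have hmax : ∀ j ∈ t, j ≤ n := fun j hj =>
        htfin.toFinset.le_max' j (htfin.mem_toFinset.mpr hj)
      refine H x0 hx0 n ⟨?_, ?_⟩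
      · rw [key]; exact hts hnt
      · rw [key]
        have hsub : t ⊆ {j : ℕ | j ≤ n ∧ f^[j] x0 ∈ XVF} :=
          fun j hj => ⟨hmax j hj, hts hj⟩
        have htn : t.ncard = k + 1 := by
          rw [Set.ncard_def, htc]; rfl
        calc k + 1 = t.ncard := htn.symm
          _ ≤ {j : ℕ | j ≤ n ∧ f^[j] x0 ∈ XVF}.ncard :=
              Set.ncard_le_ncard hsub (hfin x0 n)
end

section
/- (Theorem 4.2, CBBC on the product implies language containment) Let S = (X, X₀, f) be a system, L : X → Σ a labeling, and A = (Σ, Q, Q₀, δ, Q_Acc) an automaton with Q = {q₀,…,q_{|Q|−1}}. Suppose B : X × ℕ × ℕ → ℝ satisfies: (1) B(x, i, 0) ≤ 0 for all x ∈ X₀ and qᵢ ∈ Q₀ \ Q_Acc; (2) B(x, i, 1) ≤ 0 for all x ∈ X₀ and qᵢ ∈ Q₀ ∩ Q_Acc; (3) B(x, i, k+1) > 0 for all x ∈ X and qᵢ ∈ Q_Acc; (4) for all x ∈ X, 0 ≤ ℓ ≤ k, all i, and all q_j ∈ δ(qᵢ, L(x)) with q_j ∉ Q_Acc: B(f(x),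 j, ℓ) ≤ B(x, i, ℓ); (5) similarly with q_j ∈ Q_Acc: B(f(x), j, ℓ+1) ≤ B(x, i, ℓ). Then for every x₀ ∈ X₀, every run ρ of A on the trace n ↦ L(fⁿ(x₀)) visits Q_Acc at most k times; i.e., the trace is in the language of the k-UCA A. -/
theorem cbbc_product_implies_kUCA
    {X A Q : Type*} (X0 : Set X) (f : X → X) (L : X → A)
    (Q0 QAcc : Set Q) (δ : Q → A → Set Q) (k : ℕ) (B : X → Q → ℕ → ℝ)
    (h1 : ∀ x ∈ X0, ∀ q ∈ Q0 \ QAcc, B x q 0 ≤ 0)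
    (h2 : ∀ x ∈ X0, ∀ q ∈ Q0 ∩ QAcc, B x q 1 ≤ 0)
    (h3 : ∀ x : X, ∀ q ∈ QAcc, B x q (k + 1) > 0)
    (h4 : ∀ x : X, ∀ ℓ ≤ k, ∀ q : Q, ∀ q' ∈ δ q (L x), q' ∉ QAcc →
      B (f x) q' ℓ ≤ B x q ℓ)
    (h5 : ∀ x : X, ∀ ℓ ≤ k, ∀ q : Q, ∀ q' ∈ δ q (L x), q' ∈ QAcc →
      B (f x) q' (ℓ + 1) ≤ B x q ℓ) :
    ∀ x0 ∈ X0, ∀ ρ : ℕ → Q, ρ 0 ∈ Q0 →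
      (∀ n, ρ (n + 1) ∈ δ (ρ n) (L (f^[n] x0))) →
      {n : ℕ | ρ n ∈ QAcc}.encard ≤ (k : ℕ∞) := by
  intro x0 hx0 ρ hρ0 hρ
  classical
  set c : ℕ → ℕ := fun n => ((Finset.range (n + 1)).filter (fun m => ρ m ∈ QAcc)).card with hc
  have hcsucc : ∀ n, c (n + 1) = c n + (if ρ (n + 1) ∈ QAcc then 1 else 0) := by
    intro n
    simp only [hc]
    rw [show n + 1 + 1 = (n + 1) + 1 from rfl, Finset.range_add_one, Finset.filter_insert]
    split
    · rw [Finset.card_insert_of_notMem (by simp)]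
    · simp
  -- key invariant
  have key : ∀ n, c n ≤ k ∧ B (f^[n] x0) (ρ n) (c n) ≤ 0 := by
    intro n
    induction n with
    | zero =>
      by_cases h : ρ 0 ∈ QAcc
      · have hc0 : c 0 = 1 := by simp [hc, Finset.filter_singleton, h]
        have hB : B x0 (ρ 0) 1 ≤ 0 := h2 x0 hx0 (ρ 0) ⟨hρ0, h⟩
        have hk : 1 ≤ k := by
          by_contra hk
          have : k = 0 := by omega
          subst this
          exact absurd hB (not_le.mpr (h3 x0 (ρ 0) h))
        refine ⟨by omega, ?_⟩
        simpa [hc0] using hB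
      · have hc0 : c 0 = 0 := by simp [hc, Finset.filter_singleton, h]
        refine ⟨by omega, ?_⟩
        simpa [hc0] using h1 x0 hx0 (ρ 0) ⟨hρ0, h⟩
    | succ n ih =>
      obtain ⟨hle, hB⟩ := ih
      by_cases h : ρ (n + 1) ∈ QAcc
      · have hcn : c (n + 1) = c n + 1 := by rw [hcsucc n]; simp [h]
        have hB' : B (f^[n + 1] x0) (ρ (n + 1)) (c n + 1) ≤ 0 := by
          calc B (f^[n + 1] x0) (ρ (n + 1)) (c n + 1)
              ≤ B (f^[n] x0) (ρ n) (c n) := by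
                have := h5 (f^[n] x0) (c n) hle (ρ n) (ρ (n + 1)) (hρ n) h
                simpa [Function.iterate_succ_apply'] using this
            _ ≤ 0 := hB
        have hlt : c n + 1 ≤ k := by
          by_contra hk
          have : c n = k := by omega
          rw [this] at hB'
          exact absurd hB' (not_le.mpr (h3 _ (ρ (n + 1)) h))
        exact ⟨by omega, by rwa [hcn]⟩
      · have hcn : c (n + 1) = c n := by rw [hcsucc n]; simp [h]
        refine ⟨by omega, ?_⟩
        rw [hcn]
        calc B (f^[n + 1] x0) (ρ (n + 1)) (c n)
            ≤ B (f^[n] x0) (ρ n) (c n) := by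
              have := h4 (f^[n] x0) (c n) hle (ρ n) (ρ (n + 1)) (hρ n) h
              simpa [Function.iterate_succ_apply'] using this
          _ ≤ 0 := hB
  -- conclude
  by_contra hlt
  push_neg at hlt
  have hk1 : (k + 1 : ℕ∞) ≤ {n : ℕ | ρ n ∈ QAcc}.encard := (ENat.add_one_le_iff (by simp)).mpr hlt
  obtain ⟨t, hts, htc⟩ := Set.exists_subset_encard_eq hk1
  have htfin : t.Finite := Set.finite_of_encard_eq_coe (by exact_mod_cast htc)
  set s : Finset ℕ := htfin.toFinset with hs
  have hcard : s.card = k + 1 := by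
    have := htfin.encard_eq_coe_toFinset_card
    rw [htc] at this
    exact_mod_cast this.symm
  have hsne : s.Nonempty := by rw [← Finset.card_pos, hcard]; omega
  obtain ⟨N, hN, hNmax⟩ := s.exists_max_image id hsne
  have hsub : s ⊆ (Finset.range (N + 1)).filter (fun m => ρ m ∈ QAcc) := by
    intro m hm
    refine Finset.mem_filter.mpr ⟨Finset.mem_range.mpr ?_, ?_⟩
    · have := hNmax m hm; simpa using Nat.lt_succ_of_le this
    · exact hts (htfin.mem_toFinset.mp hm)
  have := Finset.card_le_card hsub
  have hck := (key N).1
  simp only [hc] at hck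
  omega
end
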